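/- arXiv:1311.3525 — 7 statements merged into one kernel-verified Lean document; each statement's English description precedes it below -/
import Mathlib

section
/- Let ν be a rank-1 valuation centered on a Noetherian local ring R (i.e., the value group of ν is archimedean), with support the minimal prime P_∞. Then the set ν(R \ P_∞) of values contains no infinite strictly increasing sequence that is bounded above. -/
/-!
The ideals `{x | s n ≤ ν x}` form a strictly decreasing chain, strictness being witnessed by
elements of value exactly `s n`. Every element of `m` has positive value, so by the archimedean
property some power of it has value at least the bound `β`; as `m` is finitely generated, some
`m ^ c` then lies in `{x | β ≤ ν x}`, hence in every ideal of the chain. But `R ⧸ m ^ c` is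
Artinian, so the chain must stabilize.
-/

open IsLocalRing

theorem Ideal.antitone_stabilizes_of_isArtinianRing_quotient {R : Type*} [CommRing R]
    {I : Ideal R} [IsArtinianRing (R ⧸ I)] {J : ℕ → Ideal R} (hJ : Antitone J)
    (hI : ∀ n, I ≤ J n) : ∃ n, ∀ m, n ≤ m → J m = J n := by
  let f : ℕ →o (Ideal (R ⧸ I))ᵒᵈ :=
    ⟨fun n => (J n).map (Ideal.Quotient.mk I), fun _ _ h => Ideal.map_mono (hJ h)⟩
  obtain ⟨n, hn⟩ := IsArtinian.monotone_stabilizes f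
  refine ⟨n, fun m hm => ?_⟩
  rw [← Ideal.comap_map_mk (hI m), ← Ideal.comap_map_mk (hI n)]
  exact congrArg (Ideal.comap _) (hn m hm).symm

theorem IsLocalRing.maximalIdeal_mem_minimalPrimes_pow {R : Type*} [CommRing R] [IsLocalRing R]
    {c : ℕ} (hc : c ≠ 0) : maximalIdeal R ∈ (maximalIdeal R ^ c).minimalPrimes :=
  ⟨⟨inferInstance, Ideal.pow_le_self hc⟩, fun _ ⟨hp, hle⟩ _ => hp.le_of_pow_le hle⟩

instance IsLocalRing.isArtinianRing_quotient_maximalIdeal_pow {R : Type*} [CommRing R]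
    [IsLocalRing R] [IsNoetherianRing R] (c : ℕ) :
    IsArtinianRing (R ⧸ maximalIdeal R ^ c) := by
  rcases eq_or_ne c 0 with rfl | hc
  · have : Subsingleton (R ⧸ maximalIdeal R ^ 0) := by
      rw [pow_zero, Ideal.one_eq_top]
      infer_instance
    infer_instance
  · exact quotient_artinian_of_mem_minimalPrimes_of_isLocalRing _
      (maximalIdeal_mem_minimalPrimes_pow hc)

theorem WithTop.exists_le_nsmul_of_pos {Γ : Type*} [AddCommMonoid Γ] [LinearOrder Γ]
    [IsOrderedAddMonoid Γ] [Archimedean Γ] (β : Γ) {a : WithTop Γ} (ha : 0 < a) :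
    ∃ k : ℕ, (β : WithTop Γ) ≤ k • a := by
  induction a with
  | top => exact ⟨1, by simp⟩
  | coe a =>
    obtain ⟨k, hk⟩ := Archimedean.arch β (WithTop.coe_pos.mp ha)
    exact ⟨k, by rw [← WithTop.coe_nsmul]; exact WithTop.coe_le_coe.mpr hk⟩

namespace AddValuation

section leIdeal

variable {R Γ₀ : Type*} [CommRing R] [LinearOrderedAddCommMonoidWithTop Γ₀]
  (v : AddValuation R Γ₀) (hv : ∀ a, 0 ≤ v a)

def leIdeal (γ : Γ₀) : Ideal R where
  carrier := {x | γ ≤ v x}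
  zero_mem' := by simp
  add_mem' hx hy := v.map_le_add hx hy
  smul_mem' r x hx := by
    rw [Set.mem_ofPred_eq, smul_eq_mul, v.map_mul]
    exact hx.trans (le_add_of_nonneg_left (hv r))

variable {v hv}

@[simp]
theorem mem_leIdeal {γ : Γ₀} {x : R} : x ∈ v.leIdeal hv γ ↔ γ ≤ v x := Iff.rfl

theorem leIdeal_antitone : Antitone (v.leIdeal hv) :=
  fun _ _ h _ hx => h.trans hx

end leIdeal

theorem exists_maximalIdeal_pow_le_leIdeal {R : Type*} [CommRing R] [IsLocalRing R]
    [IsNoetherianRing R] {Γ : Type*} [AddCancelCommMonoid Γ] [LinearOrder Γ]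
    [IsOrderedAddMonoid Γ] [Archimedean Γ] (v : AddValuation R (WithTop Γ))
    (hv : ∀ a, 0 ≤ v a) (hpos : ∀ a ∈ maximalIdeal R, 0 < v a) (β : Γ) :
    ∃ c, maximalIdeal R ^ c ≤ v.leIdeal hv β := by
  refine Ideal.exists_pow_le_of_le_radical_of_fg (fun t ht => ?_) (IsNoetherian.noetherian _)
  obtain ⟨k, hk⟩ := WithTop.exists_le_nsmul_of_pos β (hpos t ht)
  exact ⟨k, by rwa [mem_leIdeal, v.map_pow]⟩

end AddValuation

theorem no_bounded_strictly_increasing_sequence_of_values_general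
    {R : Type*} [CommRing R] [IsLocalRing R] [IsNoetherianRing R]
    {Γ : Type*} [AddCommGroup Γ] [LinearOrder Γ] [IsOrderedAddMonoid Γ] [Archimedean Γ]
    (v : R → WithTop Γ)
    (hv1 : v 1 = 0) (hv0 : v 0 = ⊤)
    (hmul : ∀ a b, v (a * b) = v a + v b)
    (hadd : ∀ a b, min (v a) (v b) ≤ v (a + b))
    (hnonneg : ∀ a, 0 ≤ v a)
    (hmax : ∀ a, a ∈ IsLocalRing.maximalIdeal R ↔ 0 < v a)
    (Pinf : Ideal R) :
    ¬ ∃ s : ℕ → Γ, StrictMono s ∧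
        (∀ n, ∃ x : R, x ∉ Pinf ∧ v x = (s n : WithTop Γ)) ∧
        (∃ β : Γ, ∀ n, s n ≤ β) := by
  rintro ⟨s, hs, hvalue, β, hβ⟩
  let w := AddValuation.of v hv0 hv1 hadd hmul
  obtain ⟨c, hc⟩ := w.exists_maximalIdeal_pow_le_leIdeal hnonneg (fun a => (hmax a).mp) β
  obtain ⟨n, hn⟩ := Ideal.antitone_stabilizes_of_isArtinianRing_quotient
    (I := maximalIdeal R ^ c) (J := fun n => w.leIdeal hnonneg (s n))
    (AddValuation.leIdeal_antitone.comp_monotone (WithTop.coe_mono.comp hs.monotone))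
    (fun n => hc.trans (AddValuation.leIdeal_antitone (WithTop.coe_le_coe.mpr (hβ n))))
  obtain ⟨x, -, hx⟩ := hvalue n
  have hx_mem : x ∈ w.leIdeal hnonneg (s (n + 1)) := by
    rw [hn (n + 1) n.le_succ]
    exact hx.ge
  exact (hs n.lt_succ_self).not_ge (WithTop.coe_le_coe.mp (hx ▸ hx_mem))

/-- Let ν be a rank-1 valuation (archimedean value group) centered on a
Noetherian local ring `R`, with support the minimal prime `P∞`. Then the set of values
`ν(R \ P∞)` contains no infinite strictly increasing sequence that is bounded above. -/
theorem no_bounded_strictly_increasing_sequence_of_values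
    {R : Type*} [CommRing R] [IsLocalRing R] [IsNoetherianRing R]
    {Γ : Type*} [AddCommGroup Γ] [LinearOrder Γ] [IsOrderedAddMonoid Γ] [Archimedean Γ]
    (v : R → WithTop Γ)
    (hv1 : v 1 = 0) (hv0 : v 0 = ⊤)
    (hmul : ∀ a b, v (a * b) = v a + v b)
    (hadd : ∀ a b, min (v a) (v b) ≤ v (a + b))
    (hnonneg : ∀ a, 0 ≤ v a)
    (hmax : ∀ a, a ∈ IsLocalRing.maximalIdeal R ↔ 0 < v a)
    (Pinf : Ideal R) (hPinf : ∀ a, a ∈ Pinf ↔ v a = ⊤)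
    (hminimal : Pinf ∈ minimalPrimes R) :
    ¬ ∃ s : ℕ → Γ, StrictMono s ∧
        (∀ n, ∃ x : R, x ∉ Pinf ∧ v x = (s n : WithTop Γ)) ∧
        (∃ β : Γ, ∀ n, s n ≤ β) :=
  no_bounded_strictly_increasing_sequence_of_values_general v hv1 hv0 hmul hadd hnonneg hmax Pinf
end

section
/- Let (R, m, k) be a regular local ring with regular system of parameters u = (u_1, …, u_n), let Φ be an archimedean ordered semigroup and β_1, …, β_n ∈ Φ with β_i > 0. Let Φ_* = { Σ α_i β_i | α_i ∈ ℕ }, and for γ ∈ Φ_* let I_γ be the ideal of R generated by all monomials u_1^{α_1}⋯u_n^{α_n} with Σ α_i β_i ≥ γ. Then for every nonzero f ∈ R, the set Φ_f = { γ ∈ Φ_* | f ∈ I_γ } is finite. -/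
/-! By Krull's intersection theorem a nonzero `f` avoids some power `m ^ N`. A monomial of
weighted degree `> ∑ N • β i` has some exponent `> N`, hence lies in `m ^ N`; so `f ∈ I γ`
forces `γ ≤ ∑ N • β i`. Since `Φ` is archimedean and each `β i > 0`, only finitely many exponent
vectors have weighted degree below that bound. -/

open IsLocalRing

theorem IsLocalRing.exists_notMem_maximalIdeal_pow {R : Type*} [CommRing R] [IsLocalRing R]
    [IsNoetherianRing R] {f : R} (hf : f ≠ 0) : ∃ N : ℕ, f ∉ maximalIdeal R ^ N := by
  by_contra! h
  have hK := Ideal.iInf_pow_eq_bot_of_isLocalRing (maximalIdeal R) Ideal.IsPrime.ne_top'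
  exact hf (by simpa [hK] using Ideal.mem_iInf.2 h)

theorem Ideal.prod_pow_mem_pow {R ι : Type*} [CommRing R] [Fintype ι] {J : Ideal R}
    {u : ι → R} {a : ι → ℕ} {N : ℕ} {i : ι} (hu : u i ∈ J) (hN : N ≤ a i) :
    ∏ j, u j ^ a j ∈ J ^ N := by
  classical
  rw [← Finset.mul_prod_erase _ _ (Finset.mem_univ i)]
  exact (J ^ N).mul_mem_right _ (Ideal.pow_le_pow_right hN (Ideal.pow_mem_pow hu _))

theorem Ideal.span_monomials_le_pow {R ι Φ : Type*} [CommRing R] [Fintype ι]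
    [AddCommMonoid Φ] [LinearOrder Φ] [IsOrderedAddMonoid Φ] {J : Ideal R} {u : ι → R}
    (hu : ∀ i, u i ∈ J) {β : ι → Φ} (hβ : ∀ i, 0 ≤ β i) {N : ℕ} {γ : Φ}
    (hγ : ∑ i, N • β i < γ) :
    span {m | ∃ α : ι → ℕ, m = ∏ i, u i ^ α i ∧ γ ≤ ∑ i, α i • β i} ≤ J ^ N := by
  refine span_le.2 ?_
  rintro _ ⟨α, rfl, hα⟩
  obtain ⟨i, -, hi⟩ := Finset.exists_lt_of_sum_lt (hγ.trans_le hα)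
  exact prod_pow_mem_pow (hu i) ((nsmul_left_monotone (hβ i)).reflect_lt hi).le

theorem finite_setOf_sum_nsmul_le {ι Φ : Type*} [Fintype ι] [AddCommMonoid Φ] [LinearOrder Φ]
    [IsOrderedCancelAddMonoid Φ] [Archimedean Φ] {β : ι → Φ} (hβ : ∀ i, 0 < β i) (C : Φ) :
    {γ | (∃ α : ι → ℕ, γ = ∑ i, α i • β i) ∧ γ ≤ C}.Finite := by
  choose M hM using fun i => Archimedean.arch C (hβ i)
  refine ((Set.Finite.pi fun i => Set.finite_Iic (M i)).image
    fun α => ∑ i, α i • β i).subset ?_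
  rintro _ ⟨⟨α, rfl⟩, hC⟩
  refine ⟨α, fun i _ => ?_, rfl⟩
  have hαi : α i • β i ≤ ∑ j, α j • β j :=
    Finset.single_le_sum (fun j _ => nsmul_nonneg (hβ j).le (α j)) (Finset.mem_univ i)
  exact (nsmul_le_nsmul_iff_left (hβ i)).1 (hαi.trans (hC.trans (hM i)))

theorem finite_monomial_orders_general
    {R : Type*} [CommRing R] [IsLocalRing R] [IsNoetherianRing R]
    {n : ℕ} (u : Fin n → R)
    (hu : IsLocalRing.maximalIdeal R = Ideal.span (Set.range u))
    {Φ : Type*} [AddCommMonoid Φ] [LinearOrder Φ] [IsOrderedCancelAddMonoid Φ] [Archimedean Φ]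
    (β : Fin n → Φ) (hβ : ∀ i, 0 < β i)
    (I : Φ → Ideal R)
    (hI : ∀ γ, I γ = Ideal.span
      {m | ∃ α : Fin n → ℕ, m = ∏ i, u i ^ α i ∧ γ ≤ ∑ i, α i • β i}) :
    ∀ f : R, f ≠ 0 →
      {γ : Φ | (∃ α : Fin n → ℕ, γ = ∑ i, α i • β i) ∧ f ∈ I γ}.Finite := by
  intro f hf
  obtain ⟨N, hN⟩ := exists_notMem_maximalIdeal_pow hf
  have hum : ∀ i, u i ∈ maximalIdeal R := fun i => hu ▸ Ideal.subset_span ⟨i, rfl⟩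
  refine (finite_setOf_sum_nsmul_le hβ (∑ i, N • β i)).subset ?_
  rintro γ ⟨hγ, hfγ⟩
  refine ⟨hγ, le_of_not_gt fun hlt => hN ?_⟩
  exact Ideal.span_monomials_le_pow hum (fun i => (hβ i).le) hlt (hI γ ▸ hfγ)

/-- Let `(R, m, k)` be a regular local ring (Noetherian local of Krull
dimension `n`, with `m` generated by the regular system of parameters `u_1, …, u_n`),
`Φ` an archimedean linearly ordered semigroup and `β_1, …, β_n > 0` in `Φ`.  For
`γ ∈ Φ_* = {Σ α_i β_i}` let `I_γ` be the ideal generated by the monomials `u^α` with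
`Σ α_i β_i ≥ γ`.  Then for every nonzero `f ∈ R` the set `Φ_f = {γ ∈ Φ_* | f ∈ I_γ}`
is finite. -/
theorem finite_monomial_orders
    {R : Type*} [CommRing R] [IsLocalRing R] [IsNoetherianRing R]
    {n : ℕ} (u : Fin n → R)
    (hu : IsLocalRing.maximalIdeal R = Ideal.span (Set.range u))
    (hdim : ringKrullDim R = n)
    {Φ : Type*} [AddCommMonoid Φ] [LinearOrder Φ] [IsOrderedCancelAddMonoid Φ] [Archimedean Φ]
    (β : Fin n → Φ) (hβ : ∀ i, 0 < β i)
    (I : Φ → Ideal R)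
    (hI : ∀ γ, I γ = Ideal.span
      {m | ∃ α : Fin n → ℕ, m = ∏ i, u i ^ α i ∧ γ ≤ ∑ i, α i • β i}) :
    ∀ f : R, f ≠ 0 →
      {γ : Φ | (∃ α : Fin n → ℕ, γ = ∑ i, α i • β i) ∧ f ∈ I γ}.Finite :=
  finite_monomial_orders_general u hu β hβ I hI
end

section
/- Let (R, m) be a regular local ring with regular system of parameters u = (u_1, …, u_n), and let ν be a valuation centered on R whose value group is archimedean. Let ν_{0,u} be the monomial valuation on R associated to u and to the values β_i = ν(u_i), defined by ν_{0,u}(f) = max{ γ | f ∈ I_γ } where I_γ is the ideal generated by monomials u^α with Σ α_i β_i ≥ γ. Then for every nonzero f ∈ R one has ν_{0,u}(f) ≤ ν(f). -/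
/-!
Every monomial `u^α` of weighted order `∑ αᵢ βᵢ ≥ γ` has `ν(u^α) ≥ γ`, and the `x` with `x = 0`
or `ν(x) ≥ γ` form an ideal (closure under multiples uses `ν ≥ 0` on `R`). Hence every nonzero
element of `I_γ` has value at least `γ`; apply this to `γ = ν_{0,u}(f)`.
-/

section AdditiveValue

variable {Λ : Type*} [AddCommMonoid Λ] [PartialOrder Λ] [IsOrderedAddMonoid Λ]

theorem nsmul_le_apply_pow {M : Type*} [Monoid M] (v : M → Λ)
    (hmul : ∀ a b, v (a * b) = v a + v b) (hnonneg : ∀ a, 0 ≤ v a) (x : M) (k : ℕ) :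
    k • v x ≤ v (x ^ k) := by
  induction k with
  | zero => simpa using hnonneg 1
  | succ k ih => simpa only [pow_succ, hmul, succ_nsmul] using add_le_add_left ih (v x)

theorem sum_nsmul_le_apply_prod_pow {M ι : Type*} [CommMonoid M] (v : M → Λ)
    (hmul : ∀ a b, v (a * b) = v a + v b) (hnonneg : ∀ a, 0 ≤ v a)
    (u : ι → M) (α : ι → ℕ) (s : Finset ι) :
    ∑ i ∈ s, α i • v (u i) ≤ v (∏ i ∈ s, u i ^ α i) := by
  classical
  induction s using Finset.induction with
  | empty => simpa using hnonneg 1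
  | insert a s ha ih =>
    rw [Finset.prod_insert ha, Finset.sum_insert ha, hmul]
    exact add_le_add (nsmul_le_apply_pow v hmul hnonneg (u a) (α a)) ih

end AdditiveValue

theorem le_apply_of_mem_span {R Λ : Type*} [CommSemiring R]
    [AddCommMonoid Λ] [LinearOrder Λ] [IsOrderedAddMonoid Λ]
    (v : R → Λ) (hmul : ∀ a b, v (a * b) = v a + v b)
    (hadd : ∀ a b, min (v a) (v b) ≤ v (a + b)) (hnonneg : ∀ a, 0 ≤ v a)
    {γ : Λ} {S : Set R} (hS : ∀ s ∈ S, γ ≤ v s) {x : R} (hx : x ∈ Ideal.span S) (hx0 : x ≠ 0) :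
    γ ≤ v x := by
  -- `v 0` is not pinned down by the hypotheses, so zero is excluded throughout the induction.
  induction hx using Submodule.span_induction with
  | mem s hs => exact hS s hs
  | zero => exact absurd rfl hx0
  | add x y _ _ hx hy =>
    rcases eq_or_ne x 0 with rfl | hx0'
    · simpa using hy (by simpa using hx0)
    rcases eq_or_ne y 0 with rfl | hy0'
    · simpa using hx hx0'
    exact (le_min (hx hx0') (hy hy0')).trans (hadd x y)
  | smul r x _ hx =>
    have hx0' : x ≠ 0 := by rintro rfl; exact hx0 (smul_zero r)
    calc γ = 0 + γ := (zero_add γ).symm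
      _ ≤ v r + v x := add_le_add (hnonneg r) (hx hx0')
      _ = v (r • x) := (hmul r x).symm

theorem monomial_valuation_le_general
    {R : Type*} [CommRing R]
    {n : ℕ} (u : Fin n → R)
    {Γ : Type*} [AddCommGroup Γ] [LinearOrder Γ] [IsOrderedAddMonoid Γ]
    (v : R → WithTop Γ)
    (hmul : ∀ a b, v (a * b) = v a + v b)
    (hadd : ∀ a b, min (v a) (v b) ≤ v (a + b))
    (hnonneg : ∀ a, 0 ≤ v a)
    (β : Fin n → Γ) (hβ : ∀ i, v (u i) = (β i : WithTop Γ) ∧ 0 < β i)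
    (I : Γ → Ideal R)
    (hI : ∀ γ, I γ = Ideal.span
      {m | ∃ α : Fin n → ℕ, m = ∏ i, u i ^ α i ∧ γ ≤ ∑ i, α i • β i})
    (ν₀ : R → Γ)
    (hν₀ : ∀ f : R, f ≠ 0 → f ∈ I (ν₀ f) ∧ ∀ γ : Γ, f ∈ I γ → γ ≤ ν₀ f) :
    ∀ f : R, f ≠ 0 → (ν₀ f : WithTop Γ) ≤ v f := by
  intro f hf
  have hmem := (hν₀ f hf).1
  rw [hI] at hmem
  refine le_apply_of_mem_span v hmul hadd hnonneg ?_ hmem hf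
  rintro _ ⟨α, rfl, hle⟩
  calc (ν₀ f : WithTop Γ) ≤ ((∑ i, α i • β i : Γ) : WithTop Γ) := WithTop.coe_le_coe.mpr hle
    _ = ∑ i, α i • v (u i) := by simp only [WithTop.coe_sum, WithTop.coe_nsmul, (hβ _).1]
    _ ≤ v (∏ i, u i ^ α i) := sum_nsmul_le_apply_prod_pow v hmul hnonneg u α _

/-- Let `(R, m)` be a regular local ring with regular system of
parameters `u` and ν a valuation centered on `R` with archimedean value group.  Let
`ν_{0,u}` be the monomial valuation associated to `u` and `β_i = ν(u_i)`, characterized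
by `ν_{0,u}(f) = max {γ | f ∈ I_γ}` where `I_γ` is the monomial ideal of weighted order
`≥ γ`.  Then `ν_{0,u}(f) ≤ ν(f)` for every nonzero `f ∈ R`. -/
theorem monomial_valuation_le
    {R : Type*} [CommRing R] [IsLocalRing R] [IsNoetherianRing R]
    {n : ℕ} (u : Fin n → R)
    (hu : IsLocalRing.maximalIdeal R = Ideal.span (Set.range u))
    (hdim : ringKrullDim R = n)
    {Γ : Type*} [AddCommGroup Γ] [LinearOrder Γ] [IsOrderedAddMonoid Γ] [Archimedean Γ]
    (v : R → WithTop Γ)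
    (hv1 : v 1 = 0)
    (hmul : ∀ a b, v (a * b) = v a + v b)
    (hadd : ∀ a b, min (v a) (v b) ≤ v (a + b))
    (hnonneg : ∀ a, 0 ≤ v a)
    (β : Fin n → Γ) (hβ : ∀ i, v (u i) = (β i : WithTop Γ) ∧ 0 < β i)
    (I : Γ → Ideal R)
    (hI : ∀ γ, I γ = Ideal.span
      {m | ∃ α : Fin n → ℕ, m = ∏ i, u i ^ α i ∧ γ ≤ ∑ i, α i • β i})
    (ν₀ : R → Γ)
    (hν₀ : ∀ f : R, f ≠ 0 → f ∈ I (ν₀ f) ∧ ∀ γ : Γ, f ∈ I γ → γ ≤ ν₀ f) :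
    ∀ f : R, f ≠ 0 → (ν₀ f : WithTop Γ) ≤ v f :=
  monomial_valuation_le_general u v hmul hadd hnonneg β hβ I hI ν₀ hν₀
end

section
/- Let (R, m) be a Noetherian local ring, ν a rank-1 valuation centered on R with support P_∞, R̂ the m-adic completion, and H = ⋂_β P_β R̂ the implicit prime ideal. For f ∈ R̂ the following are equivalent: (a) f ∈ H; (b) there exists a Cauchy sequence (f_n) in R converging to f in R̂ with ν(f_n) → ∞ (i.e., for every β in the value semigroup, ν(f_n) ≥ β for all large n); (c) every Cauchy sequence (f_n) in R converging to f satisfies ν(f_n) → ∞. -/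
/-!
As the value group is archimedean, every element of `m` has a power in `P_β`, so `P_β` contains a
power of `m`. Hence, along any sequence `f_n → F`, eventually `F - f_n ∈ P_β R̂`, and then
`F ∈ P_β R̂` iff `f_n ∈ P_β R̂ ∩ R = P_β`, the contraction being `P_β` because `R̂` is faithfully
flat over `R`. So for any one sequence converging to `F` (and such sequences exist), `F ∈ H` iff
`ν(f_n) → ∞`.
-/

open IsLocalRing

section Valuation

variable {R Γ : Type*} [CommRing R] [AddCommGroup Γ] [LinearOrder Γ] [IsOrderedAddMonoid Γ]
  {v : R → WithTop Γ}

theorem nsmul_le_apply_pow_s8 (hmul : ∀ a b, v (a * b) = v a + v b) (hnonneg : ∀ a, 0 ≤ v a)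
    (a : R) (n : ℕ) : n • v a ≤ v (a ^ n) := by
  induction n with
  | zero => simpa using hnonneg 1
  | succ n ih => rw [succ_nsmul, pow_succ, hmul]; gcongr

theorem exists_le_apply_pow [Archimedean Γ] (hmul : ∀ a b, v (a * b) = v a + v b)
    (hnonneg : ∀ a, 0 ≤ v a) {a : R} (ha : 0 < v a) (β : Γ) :
    ∃ n : ℕ, (β : WithTop Γ) ≤ v (a ^ n) := by
  induction h : v a using WithTop.recTopCoe with
  | top => exact ⟨1, by simp [h]⟩
  | coe γ =>
    obtain ⟨n, hn⟩ := Archimedean.arch β (WithTop.coe_pos.mp (h ▸ ha))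
    refine ⟨n, le_trans ?_ (nsmul_le_apply_pow_s8 hmul hnonneg a n)⟩
    rw [h, ← WithTop.coe_nsmul]
    exact WithTop.coe_le_coe.mpr hn

theorem exists_pow_le_of_fg [Archimedean Γ] (hmul : ∀ a b, v (a * b) = v a + v b)
    (hnonneg : ∀ a, 0 ≤ v a) {I : Ideal R} (hI : I.FG) (hpos : ∀ a ∈ I, 0 < v a)
    {J : Ideal R} {β : Γ} (hJ : ∀ a, (β : WithTop Γ) ≤ v a → a ∈ J) : ∃ n : ℕ, I ^ n ≤ J := by
  refine Ideal.exists_pow_le_of_le_radical_of_fg (fun a ha => ?_) hI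
  obtain ⟨n, hn⟩ := exists_le_apply_pow hmul hnonneg (hpos a ha) β
  exact ⟨n, hJ _ hn⟩

end Valuation

namespace AdicCompletion

variable {R : Type*} [CommRing R]

theorem exists_sub_algebraMap_mem_map_pow {I : Ideal R} (hI : I.FG)
    (F : AdicCompletion I R) (n : ℕ) :
    ∃ g : R, F - algebraMap R _ g ∈ (I ^ n).map (algebraMap R (AdicCompletion I R)) := by
  obtain ⟨g, hg⟩ := Submodule.Quotient.mk_surjective _ (F.val n)
  refine ⟨g, ?_⟩
  rw [← Submodule.restrictScalars_mem R, ← Ideal.smul_top_eq_map, pow_smul_top_eq_ker_eval hI]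
  simp only [LinearMap.mem_ker, eval_apply, val_sub, Pi.sub_apply, ← hg, sub_eq_zero]
  rfl

theorem exists_seq_sub_algebraMap_mem_map_pow {I : Ideal R} (hI : I.FG) (F : AdicCompletion I R) :
    ∃ f : ℕ → R, ∀ k : ℕ, ∃ N : ℕ, ∀ n ≥ N,
      F - algebraMap R _ (f n) ∈ (I ^ k).map (algebraMap R (AdicCompletion I R)) := by
  choose f hf using exists_sub_algebraMap_mem_map_pow hI F
  exact ⟨f, fun k => ⟨k, fun n hn => Ideal.map_mono (Ideal.pow_le_pow_right hn) (hf n)⟩⟩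

variable [IsLocalRing R] [IsNoetherianRing R]

instance : Module.FaithfullyFlat R (AdicCompletion (maximalIdeal R) R) :=
  .of_flat_of_isLocalHom

theorem mem_map_iff_eventually_mem {J : Ideal R} {k : ℕ} (hk : maximalIdeal R ^ k ≤ J)
    {F : AdicCompletion (maximalIdeal R) R} {f : ℕ → R}
    (hf : ∀ k : ℕ, ∃ N : ℕ, ∀ n ≥ N, F - algebraMap R _ (f n) ∈
      (maximalIdeal R ^ k).map (algebraMap R (AdicCompletion (maximalIdeal R) R))) :
    F ∈ J.map (algebraMap R _) ↔ ∃ N : ℕ, ∀ n ≥ N, f n ∈ J := by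
  obtain ⟨N, hN⟩ := hf k
  have hterm : ∀ n ≥ N, (F ∈ J.map (algebraMap R _) ↔ f n ∈ J) := fun n hn => by
    have hsub := Submodule.sub_mem_iff_left _ (x := F) (Ideal.map_mono hk (hN n hn))
    rw [sub_sub_cancel] at hsub
    rw [← hsub, ← Ideal.mem_comap, Ideal.comap_map_eq_self_of_faithfullyFlat]
  refine ⟨fun hF => ⟨N, fun n hn => (hterm n hn).mp hF⟩, fun ⟨N', hN'⟩ => ?_⟩
  exact (hterm _ (le_max_left N N')).mpr (hN' _ (le_max_right N N'))

end AdicCompletion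

theorem mem_implicit_ideal_iff_cauchy_general
    {R : Type*} [CommRing R] [IsLocalRing R] [IsNoetherianRing R]
    {Γ : Type*} [AddCommGroup Γ] [LinearOrder Γ] [IsOrderedAddMonoid Γ] [Archimedean Γ]
    (v : R → WithTop Γ)
    (hmul : ∀ a b, v (a * b) = v a + v b)
    (hnonneg : ∀ a, 0 ≤ v a)
    (hmax : ∀ a, a ∈ IsLocalRing.maximalIdeal R ↔ 0 < v a)
    (Pinf : Ideal R)
    (P : Γ → Ideal R) (hP : ∀ β f, f ∈ P β ↔ (β : WithTop Γ) ≤ v f)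
    (φ : R →+* AdicCompletion (IsLocalRing.maximalIdeal R) R)
    (hφ : φ = algebraMap R (AdicCompletion (IsLocalRing.maximalIdeal R) R))
    (H : Ideal (AdicCompletion (IsLocalRing.maximalIdeal R) R))
    (hH : H = ⨅ β ∈ {β : Γ | ∃ x : R, x ∉ Pinf ∧ v x = (β : WithTop Γ)},
      Ideal.map φ (P β))
    (F : AdicCompletion (IsLocalRing.maximalIdeal R) R) :
    (F ∈ H ↔ ∃ f : ℕ → R,
        (∀ k : ℕ, ∃ N : ℕ, ∀ n ≥ N,
          F - φ (f n) ∈ Ideal.map φ ((IsLocalRing.maximalIdeal R) ^ k)) ∧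
        (∀ β : Γ, (∃ x : R, x ∉ Pinf ∧ v x = (β : WithTop Γ)) →
          ∃ N : ℕ, ∀ n ≥ N, (β : WithTop Γ) ≤ v (f n))) ∧
    (F ∈ H ↔ ∀ f : ℕ → R,
        (∀ k : ℕ, ∃ N : ℕ, ∀ n ≥ N,
          F - φ (f n) ∈ Ideal.map φ ((IsLocalRing.maximalIdeal R) ^ k)) →
        (∀ β : Γ, (∃ x : R, x ∉ Pinf ∧ v x = (β : WithTop Γ)) →
          ∃ N : ℕ, ∀ n ≥ N, (β : WithTop Γ) ≤ v (f n))) := by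
  subst hφ
  have key : ∀ f : ℕ → R, (∀ k : ℕ, ∃ N : ℕ, ∀ n ≥ N,
      F - algebraMap R _ (f n) ∈ Ideal.map (algebraMap R _) (maximalIdeal R ^ k)) →
      (F ∈ H ↔ ∀ β : Γ, (∃ x : R, x ∉ Pinf ∧ v x = (β : WithTop Γ)) →
        ∃ N : ℕ, ∀ n ≥ N, (β : WithTop Γ) ≤ v (f n)) := by
    intro f hf
    simp only [hH, Ideal.mem_iInf, Set.mem_ofPred_eq]
    refine forall₂_congr fun β _ => ?_
    obtain ⟨k, hk⟩ := exists_pow_le_of_fg hmul hnonneg (maximalIdeal R).fg_of_isNoetherianRing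
      (fun a => (hmax a).mp) (fun a => (hP β a).mpr)
    simp only [AdicCompletion.mem_map_iff_eventually_mem hk hf, hP]
  obtain ⟨f₀, hf₀⟩ :=
    AdicCompletion.exists_seq_sub_algebraMap_mem_map_pow (maximalIdeal R).fg_of_isNoetherianRing F
  exact ⟨⟨fun hF => ⟨f₀, hf₀, (key f₀ hf₀).mp hF⟩, fun ⟨f, hf, hv⟩ => (key f hf).mpr hv⟩,
    ⟨fun hF f hf => (key f hf).mp hF, fun hall => (key f₀ hf₀).mpr (hall f₀ hf₀)⟩⟩

/-- With `H = ⋂_β P_β R̂` the implicit prime ideal of the `m`-adic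
completion `R̂` of a Noetherian local ring `R` carrying a rank-1 valuation ν with
support `P∞`, the following are equivalent for `F ∈ R̂`:
(a) `F ∈ H`;
(b) some Cauchy sequence `(f_n) ⊆ R` converging to `F` satisfies `ν(f_n) → ∞`;
(c) every Cauchy sequence `(f_n) ⊆ R` converging to `F` satisfies `ν(f_n) → ∞`.
Here "`ν(f_n) → ∞`" means: for every value `β ∈ ν(R \ P∞)`, `ν(f_n) ≥ β` for all
large `n`; convergence is `m`-adic. -/
theorem mem_implicit_ideal_iff_cauchy
    {R : Type*} [CommRing R] [IsLocalRing R] [IsNoetherianRing R]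
    {Γ : Type*} [AddCommGroup Γ] [LinearOrder Γ] [IsOrderedAddMonoid Γ] [Archimedean Γ]
    (v : R → WithTop Γ)
    (hv1 : v 1 = 0) (hv0 : v 0 = ⊤)
    (hmul : ∀ a b, v (a * b) = v a + v b)
    (hadd : ∀ a b, min (v a) (v b) ≤ v (a + b))
    (hnonneg : ∀ a, 0 ≤ v a)
    (hmax : ∀ a, a ∈ IsLocalRing.maximalIdeal R ↔ 0 < v a)
    (Pinf : Ideal R) (hPinf : ∀ a, a ∈ Pinf ↔ v a = ⊤)
    (hminimal : Pinf ∈ minimalPrimes R)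
    (P : Γ → Ideal R) (hP : ∀ β f, f ∈ P β ↔ (β : WithTop Γ) ≤ v f)
    (φ : R →+* AdicCompletion (IsLocalRing.maximalIdeal R) R)
    (hφ : φ = algebraMap R (AdicCompletion (IsLocalRing.maximalIdeal R) R))
    (H : Ideal (AdicCompletion (IsLocalRing.maximalIdeal R) R))
    (hH : H = ⨅ β ∈ {β : Γ | ∃ x : R, x ∉ Pinf ∧ v x = (β : WithTop Γ)},
      Ideal.map φ (P β))
    (F : AdicCompletion (IsLocalRing.maximalIdeal R) R) :
    (F ∈ H ↔ ∃ f : ℕ → R,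
        (∀ k : ℕ, ∃ N : ℕ, ∀ n ≥ N,
          F - φ (f n) ∈ Ideal.map φ ((IsLocalRing.maximalIdeal R) ^ k)) ∧
        (∀ β : Γ, (∃ x : R, x ∉ Pinf ∧ v x = (β : WithTop Γ)) →
          ∃ N : ℕ, ∀ n ≥ N, (β : WithTop Γ) ≤ v (f n))) ∧
    (F ∈ H ↔ ∀ f : ℕ → R,
        (∀ k : ℕ, ∃ N : ℕ, ∀ n ≥ N,
          F - φ (f n) ∈ Ideal.map φ ((IsLocalRing.maximalIdeal R) ^ k)) →
        (∀ β : Γ, (∃ x : R, x ∉ Pinf ∧ v x = (β : WithTop Γ)) →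
          ∃ N : ℕ, ∀ n ≥ N, (β : WithTop Γ) ≤ v (f n))) :=
  mem_implicit_ideal_iff_cauchy_general v hmul hnonneg hmax Pinf P hP φ hφ H hH F
end

section
/- Let α, γ ∈ ℕ^n and define δ_i = min(α_i, γ_i), α̃ = α − δ, γ̃ = γ − δ, and (after possibly swapping α and γ) assume |α̃| ≤ |γ̃|, where |·| denotes the sum of coordinates. Suppose the supports of α̃ and γ̃ are disjoint. Let J ⊆ {1, …, n} be a minimal (under inclusion) subset containing the support of α̃ with Σ_{i∈J} γ̃_i ≥ |α̃|, and pick j ∈ J. Define α̃′ and γ̃′ by α̃′_i = α̃_i for i ≠ j, α̃′_j = 0; γ̃′_i = γ̃_i for i ≠ j, γ̃′_j = Σ_{i∈J} γ̃_i − |α̃|. Then τ(α̃′, γ̃′) <_lex τ(α̃, γ̃), where τ(a, b) = (min(|ã|,|b̃|), max(|ã|,|b̃|)) computed after subtracting the common part of a and b. -/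
private lemma lex_helper {a b c d : ℕ} (h : a < c ∨ (a = c ∧ b < d)) :
    Prod.Lex (· < ·) (· < ·) (a, b) (c, d) := by
  rcases h with h | ⟨rfl, h⟩
  · exact Prod.Lex.left _ _ h
  · exact Prod.Lex.right _ h

/-- Combinatorial core of monomialization (Hironaka's game).  Given
exponent vectors `α, γ ∈ ℕ^n`, set `δ_i = min(α_i, γ_i)`, `α̃ = α − δ`, `γ̃ = γ − δ`,
with `|α̃| ≤ |γ̃|` and disjoint supports.  Let `J` be a minimal subset containing the
support of `α̃` with `Σ_{i∈J} γ̃_i ≥ |α̃|`, and `j ∈ J`.  Defining `α̃′, γ̃′` by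
`α̃′_i = α̃_i (i ≠ j), α̃′_j = 0` and `γ̃′_i = γ̃_i (i ≠ j),
γ̃′_j = Σ_{i∈J} γ̃_i − |α̃|`, one has `τ(α̃′, γ̃′) <_lex τ(α̃, γ̃)`, where
`τ(a,b) = (min(|ã|,|b̃|), max(|ã|,|b̃|))` computed after subtracting the common part. -/
theorem tau_lex_decreases
    {n : ℕ} (α γ : Fin n → ℕ)
    (δ : Fin n → ℕ) (hδ : ∀ i, δ i = min (α i) (γ i))
    (ta tg : Fin n → ℕ)
    (hta : ∀ i, ta i = α i - δ i) (htg : ∀ i, tg i = γ i - δ i)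
    (hord : ∑ i, ta i ≤ ∑ i, tg i)
    (hdisj : ∀ i, ta i = 0 ∨ tg i = 0)
    (J : Finset (Fin n))
    (hsupp : ∀ i, ta i ≠ 0 → i ∈ J)
    (hsum : ∑ i, ta i ≤ ∑ i ∈ J, tg i)
    (hmin : ∀ J' ⊆ J, (∀ i, ta i ≠ 0 → i ∈ J') → (∑ i, ta i ≤ ∑ i ∈ J', tg i) → J' = J)
    (j : Fin n) (hj : j ∈ J)
    (ta' tg' : Fin n → ℕ)
    (hta' : ∀ i, ta' i = if i = j then 0 else ta i)
    (htg' : ∀ i, tg' i = if i = j then (∑ i ∈ J, tg i) - ∑ i, ta i else tg i) :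
    Prod.Lex (· < ·) (· < ·)
      (min (∑ i, (ta' i - min (ta' i) (tg' i))) (∑ i, (tg' i - min (ta' i) (tg' i))),
       max (∑ i, (ta' i - min (ta' i) (tg' i))) (∑ i, (tg' i - min (ta' i) (tg' i))))
      (min (∑ i, ta i) (∑ i, tg i), max (∑ i, ta i) (∑ i, tg i)) := by
  classical
  set A := ∑ i, ta i with hA
  set G := ∑ i, tg i with hG
  set S := ∑ i ∈ J, tg i with hS
  have key1 : ∀ i, ta' i - min (ta' i) (tg' i) = if i = j then 0 else ta i := by
    intro i
    by_cases h : i = j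
    · simp [hta', h]
    · rcases hdisj i with h0 | h0 <;> simp [hta', htg', h, h0]
  have key2 : ∀ i, tg' i - min (ta' i) (tg' i) = if i = j then S - A else tg i := by
    intro i
    by_cases h : i = j
    · simp [hta', htg', h]
    · rcases hdisj i with h0 | h0 <;> simp [hta', htg', h, h0]
  have htaj : ta j ≤ A := Finset.single_le_sum (fun i _ => Nat.zero_le _) (Finset.mem_univ j)
  have htgj : tg j ≤ G := Finset.single_le_sum (fun i _ => Nat.zero_le _) (Finset.mem_univ j)
  have esplit1 : (if j = j then 0 else ta j) + ∑ i ∈ Finset.univ.erase j, (if i = j then 0 else ta i)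
      = ∑ i, (if i = j then 0 else ta i) :=
    Finset.add_sum_erase _ (fun i => if i = j then 0 else ta i) (Finset.mem_univ j)
  have esplit1' : ta j + ∑ i ∈ Finset.univ.erase j, ta i = A :=
    Finset.add_sum_erase _ ta (Finset.mem_univ j)
  have econg1 : ∑ i ∈ Finset.univ.erase j, (if i = j then 0 else ta i)
      = ∑ i ∈ Finset.univ.erase j, ta i := by
    apply Finset.sum_congr rfl
    intro i hi
    simp [Finset.mem_erase.mp hi |>.1]
  have hsum1 : ∑ i, (ta' i - min (ta' i) (tg' i)) = A - ta j := by
    simp only [key1]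
    rw [← esplit1, econg1, if_pos rfl, Nat.zero_add]
    omega
  have esplit2 : (if j = j then S - A else tg j)
      + ∑ i ∈ Finset.univ.erase j, (if i = j then S - A else tg i)
      = ∑ i, (if i = j then S - A else tg i) :=
    Finset.add_sum_erase _ (fun i => if i = j then S - A else tg i) (Finset.mem_univ j)
  have esplit2' : tg j + ∑ i ∈ Finset.univ.erase j, tg i = G :=
    Finset.add_sum_erase _ tg (Finset.mem_univ j)
  have econg2 : ∑ i ∈ Finset.univ.erase j, (if i = j then S - A else tg i)
      = ∑ i ∈ Finset.univ.erase j, tg i := by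
    apply Finset.sum_congr rfl
    intro i hi
    simp [Finset.mem_erase.mp hi |>.1]
  have hsum2 : ∑ i, (tg' i - min (ta' i) (tg' i)) = (S - A) + (G - tg j) := by
    simp only [key2]
    rw [← esplit2, econg2, if_pos rfl]
    omega
  rw [hsum1, hsum2]
  apply lex_helper
  rcases Nat.eq_zero_or_pos (ta j) with h0 | h0
  · -- ta j = 0 : use minimality with J.erase j
    have hkey : S - tg j < A := by
      by_contra h
      push_neg at h
      have herase : ∑ i ∈ J.erase j, tg i = S - tg j := by
        have := Finset.add_sum_erase J tg hj
        omega
      have heq := hmin (J.erase j) (Finset.erase_subset _ _)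
        (fun i hi => Finset.mem_erase.mpr ⟨fun e => hi (e ▸ h0), hsupp i hi⟩)
        (by rw [herase]; exact h)
      rw [← heq] at hj
      exact (Finset.mem_erase.mp hj).1 rfl
    omega
  · omega
end

section
/- Let (R, m) be a regular local ring with regular system of parameters u, and let ν be a valuation of rank 1 centered on R. Call f ∈ R non-degenerate with respect to ν and u if ν_{0,u}(f) = ν(f), where ν_{0,u} is the monomial valuation associated to u and the values ν(u_i). If (R, u) → (R′, u′) is a ring map such that each u_j equals a monomial in u′ times a unit of R′, ν extends to a valuation centered on R′, and ν_{0,u′} denotes the monomial valuation of R′ for the values ν(u′_i), then ν_{0,u}(f) ≤ ν_{0,u′}(f) ≤ ν(f) for all nonzero f ∈ R; in particular, if f is non-degenerate with respect to u then f is non-degenerate with respect to u′. -/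
/-!
Computing `ν(u_j)` from `u_j = z_j ∏ u'_i ^ δ_{ji}` with `z_j` a unit gives
`β_j = ∑ i, δ_{ji} • β'_i`. Hence `φ` sends a `u`-monomial of weight `≥ γ` to a unit times a
`u'`-monomial of the same weight, so `φ` maps the monomial ideal `I γ` into `I' γ`, which gives `ν₀ f ≤ ν₀' (φ f)`. The second inequality holds
because, by the ultrametric inequality, every nonzero element of `I' γ` has value at least `γ`.
-/

open Finset

section Valuation

variable {R M : Type*} {v : R → M}

theorem val_pow [Monoid R] [AddMonoid M] (hv1 : v 1 = 0)
    (hmul : ∀ a b, v (a * b) = v a + v b) (x : R) (k : ℕ) : v (x ^ k) = k • v x := by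
  induction k with
  | zero => simpa using hv1
  | succ k ih => rw [pow_succ, hmul, ih, succ_nsmul]

theorem val_prod [CommMonoid R] [AddCommMonoid M] (hv1 : v 1 = 0)
    (hmul : ∀ a b, v (a * b) = v a + v b) {ι : Type*} (s : Finset ι) (g : ι → R) :
    v (∏ i ∈ s, g i) = ∑ i ∈ s, v (g i) := by
  induction s using Finset.cons_induction with
  | empty => simpa using hv1
  | cons a s ha ih => rw [prod_cons, sum_cons, hmul, ih]

theorem val_monomial [CommMonoid R] [AddCommMonoid M] (hv1 : v 1 = 0)
    (hmul : ∀ a b, v (a * b) = v a + v b) {ι : Type*} [Fintype ι] {x : ι → R} {b : ι → M}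
    (hx : ∀ i, v (x i) = b i) (a : ι → ℕ) : v (∏ i, x i ^ a i) = ∑ i, a i • b i := by
  simp only [val_prod hv1 hmul, val_pow hv1 hmul, hx]

theorem val_unit_eq_zero [Monoid R] [AddCommMonoid M] [PartialOrder M] [IsOrderedAddMonoid M]
    (hv1 : v 1 = 0) (hmul : ∀ a b, v (a * b) = v a + v b) (hnonneg : ∀ a, 0 ≤ v a) (w : Rˣ) :
    v w = 0 := by
  refine le_antisymm ?_ (hnonneg w)
  calc v w ≤ v w + v ↑w⁻¹ := le_add_of_nonneg_right (hnonneg _)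
    _ = 0 := by rw [← hmul, Units.mul_inv, hv1]

theorem eq_zero_or_le_val_of_mem_span [CommSemiring R] [AddCommMonoid M] [LinearOrder M]
    [IsOrderedAddMonoid M] (hmul : ∀ a b, v (a * b) = v a + v b)
    (hadd : ∀ a b, min (v a) (v b) ≤ v (a + b)) (hnonneg : ∀ a, 0 ≤ v a) {γ : M} {S : Set R}
    (hS : ∀ s ∈ S, γ ≤ v s) {x : R} (hx : x ∈ Ideal.span S) : x = 0 ∨ γ ≤ v x := by
  induction hx using Submodule.span_induction with
  | mem y hy => exact .inr (hS y hy)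
  | zero => exact .inl rfl
  | add y w _ _ hy hw =>
    rcases hy with rfl | hy
    · simpa using hw
    rcases hw with rfl | hw
    · simpa using Or.inr hy
    exact .inr ((le_min hy hw).trans (hadd y w))
  | smul r y _ hy =>
    rcases hy with rfl | hy
    · simp
    exact .inr (by rw [smul_eq_mul, hmul]; exact le_add_of_nonneg_of_le (hnonneg r) hy)

end Valuation

theorem prod_pow_eq_mul_prod_pow {M ι κ : Type*} [CommMonoid M] [Fintype ι] [Fintype κ]
    {x z : ι → M} {y : κ → M} {δ : ι → κ → ℕ} (hx : ∀ i, x i = z i * ∏ j, y j ^ δ i j)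
    (a : ι → ℕ) : ∏ i, x i ^ a i = (∏ i, z i ^ a i) * ∏ j, y j ^ ∑ i, a i * δ i j := by
  simp_rw [hx, mul_pow, prod_mul_distrib, ← prod_pow, ← pow_mul, mul_comm (δ _ _)]
  rw [prod_comm]
  simp_rw [prod_pow_eq_pow_sum]

theorem sum_nsmul_sum_nsmul {M ι κ : Type*} [AddCommMonoid M] [Fintype ι] [Fintype κ]
    (a : ι → ℕ) (δ : ι → κ → ℕ) (b : κ → M) :
    ∑ i, a i • ∑ j, δ i j • b j = ∑ j, (∑ i, a i * δ i j) • b j := by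
  simp_rw [smul_sum, smul_smul, sum_smul]
  exact sum_comm

def monomialIdeal {R ι Γ : Type*} [CommSemiring R] [Fintype ι] [AddCommMonoid Γ] [LE Γ]
    (u : ι → R) (β : ι → Γ) (γ : Γ) : Ideal R :=
  Ideal.span {m | ∃ a : ι → ℕ, m = ∏ i, u i ^ a i ∧ γ ≤ ∑ i, a i • β i}

theorem map_mem_monomialIdeal {R R' ι κ Γ : Type*} [CommRing R] [CommRing R'] [Fintype ι]
    [Fintype κ] [AddCommMonoid Γ] [Preorder Γ] (φ : R →+* R') {u : ι → R} {u' : κ → R'}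
    {z : ι → R'} {δ : ι → κ → ℕ} (hmono : ∀ i, φ (u i) = z i * ∏ j, u' j ^ δ i j)
    {β : ι → Γ} {β' : κ → Γ} (hβ : ∀ i, β i = ∑ j, δ i j • β' j) {γ : Γ} {f : R}
    (hf : f ∈ monomialIdeal u β γ) : φ f ∈ monomialIdeal u' β' γ := by
  suffices monomialIdeal u β γ ≤ (monomialIdeal u' β' γ).comap φ from this hf
  refine Ideal.span_le.2 ?_
  rintro _ ⟨a, rfl, ha⟩
  rw [SetLike.mem_coe, Ideal.mem_comap, map_prod]
  simp_rw [map_pow]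
  rw [prod_pow_eq_mul_prod_pow hmono]
  refine Ideal.mul_mem_left _ _ (Ideal.subset_span ⟨_, rfl, ha.trans_eq ?_⟩)
  simp_rw [hβ, sum_nsmul_sum_nsmul]

theorem nondegenerate_stable_under_framed_blowup_general
    {R R' : Type*} [CommRing R] [CommRing R']
    {Γ : Type*} [AddCommGroup Γ] [LinearOrder Γ] [IsOrderedAddMonoid Γ]
    (φ : R →+* R')
    (v' : R' → WithTop Γ)
    (hv1 : v' 1 = 0)
    (hmul : ∀ a b, v' (a * b) = v' a + v' b)
    (hadd : ∀ a b, min (v' a) (v' b) ≤ v' (a + b))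
    (hnonneg : ∀ a, 0 ≤ v' a)
    {n n' : ℕ} (u : Fin n → R) (u' : Fin n' → R')
    (β : Fin n → Γ) (hβ : ∀ i, v' (φ (u i)) = (β i : WithTop Γ) ∧ 0 < β i)
    (β' : Fin n' → Γ) (hβ' : ∀ i, v' (u' i) = (β' i : WithTop Γ) ∧ 0 < β' i)
    (δ : Fin n → Fin n' → ℕ) (z : Fin n → R'ˣ)
    (hmono : ∀ j, φ (u j) = (z j : R') * ∏ i, u' i ^ δ j i)
    (I : Γ → Ideal R)
    (hI : ∀ γ, I γ = Ideal.span
      {m | ∃ a : Fin n → ℕ, m = ∏ i, u i ^ a i ∧ γ ≤ ∑ i, a i • β i})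
    (I' : Γ → Ideal R')
    (hI' : ∀ γ, I' γ = Ideal.span
      {m | ∃ a : Fin n' → ℕ, m = ∏ i, u' i ^ a i ∧ γ ≤ ∑ i, a i • β' i})
    (ν₀ : R → Γ)
    (hν₀ : ∀ f : R, f ≠ 0 → f ∈ I (ν₀ f) ∧ ∀ γ : Γ, f ∈ I γ → γ ≤ ν₀ f)
    (ν₀' : R' → Γ)
    (hν₀' : ∀ g : R', g ≠ 0 → g ∈ I' (ν₀' g) ∧ ∀ γ : Γ, g ∈ I' γ → γ ≤ ν₀' g)
    (f : R) (hf : f ≠ 0) (hφf : φ f ≠ 0) :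
    ν₀ f ≤ ν₀' (φ f) ∧ (ν₀' (φ f) : WithTop Γ) ≤ v' (φ f) := by
  have hval_monomial := val_monomial hv1 hmul fun i ↦ (hβ' i).1
  have hweight : ∀ j, β j = ∑ i, δ j i • β' i := fun j ↦ by
    have h := (hβ j).1
    rw [hmono, hmul, val_unit_eq_zero hv1 hmul hnonneg, zero_add, hval_monomial] at h
    exact_mod_cast h.symm
  obtain ⟨hfI, -⟩ := hν₀ f hf
  obtain ⟨hφfI, hφf_max⟩ := hν₀' (φ f) hφf
  rw [hI] at hfI
  rw [hI'] at hφfI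
  refine ⟨hφf_max _ ?_, ?_⟩
  · rw [hI']
    exact map_mem_monomialIdeal φ hmono hweight hfI
  · refine (eq_zero_or_le_val_of_mem_span hmul hadd hnonneg ?_ hφfI).resolve_left hφf
    rintro _ ⟨a, rfl, ha⟩
    rw [hval_monomial]
    exact_mod_cast ha

/-- Non-degeneracy is preserved by framed blowups.  Let `φ : R → R'`
be a local homomorphism of regular local rings with regular systems of parameters `u`
and `u'`, such that each `φ(u_j)` is a monomial in `u'` times a unit of `R'`.  Let
`ν'` be a rank-1 valuation centered on `R'` (restricting to ν on `R` via `φ`), and let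
`ν_{0,u}`, `ν_{0,u'}` be the monomial valuations for the weights `β_i = ν(u_i)`,
`β'_i = ν'(u'_i)`.  Then for all nonzero `f ∈ R`:
`ν_{0,u}(f) ≤ ν_{0,u'}(φ f) ≤ ν'(φ f)`; in particular, if `f` is non-degenerate for `u`
(`ν_{0,u}(f) = ν(f)`) then `φ f` is non-degenerate for `u'`. -/
theorem nondegenerate_stable_under_framed_blowup
    {R R' : Type*} [CommRing R] [CommRing R'] [IsLocalRing R] [IsLocalRing R']
    {Γ : Type*} [AddCommGroup Γ] [LinearOrder Γ] [IsOrderedAddMonoid Γ] [Archimedean Γ]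
    (φ : R →+* R')
    (hloc : ∀ a : R, a ∈ IsLocalRing.maximalIdeal R → φ a ∈ IsLocalRing.maximalIdeal R')
    (v' : R' → WithTop Γ)
    (hv1 : v' 1 = 0)
    (hmul : ∀ a b, v' (a * b) = v' a + v' b)
    (hadd : ∀ a b, min (v' a) (v' b) ≤ v' (a + b))
    (hnonneg : ∀ a, 0 ≤ v' a)
    {n n' : ℕ} (u : Fin n → R) (u' : Fin n' → R')
    (hu : IsLocalRing.maximalIdeal R = Ideal.span (Set.range u))
    (hu' : IsLocalRing.maximalIdeal R' = Ideal.span (Set.range u'))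
    (β : Fin n → Γ) (hβ : ∀ i, v' (φ (u i)) = (β i : WithTop Γ) ∧ 0 < β i)
    (β' : Fin n' → Γ) (hβ' : ∀ i, v' (u' i) = (β' i : WithTop Γ) ∧ 0 < β' i)
    (δ : Fin n → Fin n' → ℕ) (z : Fin n → R'ˣ)
    (hmono : ∀ j, φ (u j) = (z j : R') * ∏ i, u' i ^ δ j i)
    (I : Γ → Ideal R)
    (hI : ∀ γ, I γ = Ideal.span
      {m | ∃ a : Fin n → ℕ, m = ∏ i, u i ^ a i ∧ γ ≤ ∑ i, a i • β i})
    (I' : Γ → Ideal R')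
    (hI' : ∀ γ, I' γ = Ideal.span
      {m | ∃ a : Fin n' → ℕ, m = ∏ i, u' i ^ a i ∧ γ ≤ ∑ i, a i • β' i})
    (ν₀ : R → Γ)
    (hν₀ : ∀ f : R, f ≠ 0 → f ∈ I (ν₀ f) ∧ ∀ γ : Γ, f ∈ I γ → γ ≤ ν₀ f)
    (ν₀' : R' → Γ)
    (hν₀' : ∀ g : R', g ≠ 0 → g ∈ I' (ν₀' g) ∧ ∀ γ : Γ, g ∈ I' γ → γ ≤ ν₀' g)
    (f : R) (hf : f ≠ 0) (hφf : φ f ≠ 0) :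
    ν₀ f ≤ ν₀' (φ f) ∧ (ν₀' (φ f) : WithTop Γ) ≤ v' (φ f) :=
  nondegenerate_stable_under_framed_blowup_general φ v' hv1 hmul hadd hnonneg u u' β hβ β' hβ' δ z
    hmono I hI I' hI' ν₀ hν₀ ν₀' hν₀' f hf hφf
end

section
/- Let ν be a valuation centered on a Noetherian local domain (R, m) and let (β_i)_{i≥1} ⊆ ν(R \ {0}) be a sequence such that β_{i+1} > β_i for all i. If the value group has rank 1, then (β_i) is unbounded above in the value group. -/
universe u

/-- A finitely generated module over a Noetherian ring killed by a power of a maximal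
ideal is Artinian. -/
lemma isArtinian_of_pow_smul_top_eq_bot {R : Type u} [CommRing R] [IsNoetherianRing R]
    (I : Ideal R) (hI : I.IsMaximal) :
    ∀ (N : ℕ) (M : Type u) [AddCommGroup M] [Module R M] [Module.Finite R M],
      I ^ N • (⊤ : Submodule R M) = ⊥ → IsArtinian R M := by
  intro N
  induction N with
  | zero =>
    intro M _ _ _ h
    rw [pow_zero, Ideal.one_eq_top, Submodule.top_smul] at h
    have : Subsingleton M := by
      refine subsingleton_of_forall_eq 0 fun x => ?_
      have hx : x ∈ (⊥ : Submodule R M) := h ▸ Submodule.mem_top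
      simpa using hx
    infer_instance
  | succ N ih =>
    intro M _ _ _ h
    set K : Submodule R M := I ^ N • ⊤ with hK
    have hQ : IsArtinian R (M ⧸ K) := by
      apply ih
      have : Submodule.map K.mkQ (I ^ N • (⊤ : Submodule R M)) =
          I ^ N • (⊤ : Submodule R (M ⧸ K)) := by
        rw [Submodule.map_smul'', Submodule.map_top, Submodule.range_mkQ]
      rw [← this, ← hK]
      rw [eq_bot_iff]
      rintro x ⟨y, hy, rfl⟩
      simp only [Submodule.mkQ_apply, Submodule.mem_bot, Submodule.Quotient.mk_eq_zero]
      exact hy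
    have hIK : I • K = ⊥ := by
      rw [hK, ← Submodule.smul_assoc, smul_eq_mul, ← pow_succ']
      exact h
    -- K is a module over the field R ⧸ I
    have htor : Module.IsTorsionBySet R K (I : Set R) := by
      intro x r
      have : (r : R) • (x : M) ∈ I • K := Submodule.smul_mem_smul r.2 x.2
      rw [hIK] at this
      ext
      simpa using this
    letI : Module (R ⧸ I) K := htor.module
    letI : Field (R ⧸ I) := Ideal.Quotient.field I
    haveI : IsScalarTower R (R ⧸ I) K := htor.isScalarTower
    haveI : Module.Finite R K := Module.Finite.iff_fg.mpr (IsNoetherian.noetherian K)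
    haveI : Module.Finite (R ⧸ I) K := Module.Finite.of_restrictScalars_finite R _ _
    haveI : IsArtinian (R ⧸ I) K := isArtinian_of_fg_of_artinian'
    haveI hKart : IsArtinian R K := by
      let f : Submodule R K → Submodule (R ⧸ I) K := fun p =>
        { carrier := p
          add_mem' := fun ha hb => p.add_mem ha hb
          zero_mem' := p.zero_mem
          smul_mem' := by
            intro c x hx
            obtain ⟨c, rfl⟩ := Ideal.Quotient.mk_surjective c
            show (Ideal.Quotient.mk I c) • x ∈ p
            rw [htor.mk_smul]
            exact p.smul_mem c hx }
      have hf : StrictMono f := by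
        intro p q hpq
        rw [lt_iff_le_and_ne] at hpq ⊢
        refine ⟨fun x hx => hpq.1 hx, fun hEq => hpq.2 ?_⟩
        ext x
        exact SetLike.ext_iff.mp hEq x
      exact hf.wellFoundedLT
    exact (isArtinian_iff_submodule_quotient K).mpr ⟨hKart, hQ⟩


/-- Let ν be a rank-1 valuation (archimedean value group Γ, with Γ
generated by values: every `γ ∈ Γ` satisfies `γ + ν(b) = ν(a)` for some nonzero
`a, b ∈ R`) centered on a Noetherian local domain `R`.  Then every strictly increasing
sequence `(β_i)` in `ν(R \ {0})` is unbounded above in the value group: for every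
`β ∈ Γ` there is `n` with `β < β_n`. -/
theorem strictMono_value_sequence_unbounded
    {R : Type*} [CommRing R] [IsDomain R] [IsLocalRing R] [IsNoetherianRing R]
    {Γ : Type*} [AddCommGroup Γ] [LinearOrder Γ] [IsOrderedAddMonoid Γ] [Archimedean Γ]
    (v : R → WithTop Γ)
    (hv1 : v 1 = 0) (hv0 : ∀ a : R, v a = ⊤ ↔ a = 0)
    (hmul : ∀ a b, v (a * b) = v a + v b)
    (hadd : ∀ a b, min (v a) (v b) ≤ v (a + b))
    (hnonneg : ∀ a, 0 ≤ v a)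
    (hmax : ∀ a, a ∈ IsLocalRing.maximalIdeal R ↔ 0 < v a)
    (hgen : ∀ γ : Γ, ∃ a b : R, a ≠ 0 ∧ b ≠ 0 ∧ (γ : WithTop Γ) + v b = v a)
    (s : ℕ → Γ) (hmono : StrictMono s)
    (hval : ∀ n, ∃ x : R, x ≠ 0 ∧ v x = (s n : WithTop Γ)) :
    ∀ β : Γ, ∃ n, β < s n := by
  classical
  intro β
  by_contra hcon
  push_neg at hcon
  -- the valuation ideals
  set m := IsLocalRing.maximalIdeal R with hm
  let I : WithTop Γ → Ideal R := fun α =>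
    { carrier := {x | α ≤ v x}
      add_mem' := by
        intro a b ha hb
        exact le_trans (le_min ha hb) (hadd a b)
      zero_mem' := by
        have : v 0 = ⊤ := (hv0 0).mpr rfl
        simp [this]
      smul_mem' := by
        intro c x hx
        show α ≤ v (c * x)
        rw [hmul]
        calc α ≤ v x := hx
        _ ≤ v c + v x := le_add_of_nonneg_left (hnonneg c) }
  have hImem : ∀ (α : WithTop Γ) (x : R), x ∈ I α ↔ α ≤ v x := fun _ _ => Iff.rfl
  have hIanti : ∀ {α α' : WithTop Γ}, α ≤ α' → I α' ≤ I α := by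
    intro α α' h x hx
    exact le_trans h hx
  have hImul : ∀ α γ : WithTop Γ, I α * I γ ≤ I (α + γ) := by
    intro α γ
    rw [Ideal.mul_le]
    intro a ha b hb
    show α + γ ≤ v (a * b)
    rw [hmul]
    exact add_le_add ha hb
  -- a positive lower bound for values on the maximal ideal
  obtain ⟨S, hS⟩ : m.FG := IsNoetherian.noetherian m
  set ε : WithTop Γ := S.inf v with hε
  have hεpos : 0 < ε := by
    rw [hε, Finset.lt_inf_iff (show (0 : WithTop Γ) < ⊤ from WithTop.coe_lt_top 0)]
    intro t ht
    exact (hmax t).mp (hS ▸ Ideal.subset_span ht)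
  have hmle : m ≤ I ε := by
    rw [← hS, Ideal.span_le]
    intro t ht
    show ε ≤ v t
    rw [hε]
    exact Finset.inf_le ht
  -- if the maximal ideal is trivial, all values are 0, contradicting strict monotonicity
  have hmbot : m ≠ ⊥ := by
    intro hbot
    obtain ⟨x, hx0, hxv⟩ := hval 1
    have h1 : 0 < s 1 := by
      have h0 : (0 : WithTop Γ) ≤ s 0 := by
        obtain ⟨y, hy0, hyv⟩ := hval 0
        rw [← hyv]; exact hnonneg y
      have : (s 0 : WithTop Γ) < s 1 := WithTop.coe_lt_coe.mpr (hmono (by norm_num))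
      exact_mod_cast lt_of_le_of_lt h0 this
    have : x ∈ m := (hmax x).mpr (by rw [hxv]; exact_mod_cast h1)
    rw [hbot] at this
    exact hx0 (by simpa using this)
  -- ε is not ⊤
  have hεne : ε ≠ ⊤ := by
    intro hT
    apply hmbot
    rw [eq_bot_iff]
    intro x hx
    have hvx : ε ≤ v x := hmle hx
    rw [hT, top_le_iff] at hvx
    simpa using (hv0 x).mp hvx
  obtain ⟨ε₀, hε₀⟩ : ∃ ε₀ : Γ, ε = (ε₀ : WithTop Γ) := by
    obtain ⟨ε₀, h⟩ := WithTop.ne_top_iff_exists.mp hεne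
    exact ⟨ε₀, h.symm⟩
  have hε₀pos : 0 < ε₀ := by
    rw [hε₀] at hεpos; exact_mod_cast hεpos
  -- Archimedean: find N with β ≤ N • ε₀
  obtain ⟨N, hN⟩ := Archimedean.arch β hε₀pos
  -- m ^ N ≤ I β
  have hpow : ∀ k : ℕ, m ^ k ≤ I ((k • ε₀ : Γ) : WithTop Γ) := by
    intro k
    induction k with
    | zero =>
      intro x _
      rw [hImem]
      simp only [zero_smul, WithTop.coe_zero]
      exact hnonneg x
    | succ k ih =>
      have : m ^ (k + 1) ≤ I (((k • ε₀ : Γ) : WithTop Γ)) * I ε := by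
        rw [pow_succ]
        exact Ideal.mul_mono ih hmle
      refine le_trans this (le_trans (hImul _ _) (hIanti ?_))
      rw [succ_nsmul, hε₀]
      push_cast
      exact le_refl _
  have hmN : m ^ N ≤ I (β : WithTop Γ) := by
    refine le_trans (hpow N) (hIanti ?_)
    exact_mod_cast hN
  -- the strictly decreasing chain of ideals
  have hchain : ∀ n, I ((s (n + 1) : WithTop Γ)) < I ((s n : WithTop Γ)) := by
    intro n
    obtain ⟨x, hx0, hxv⟩ := hval n
    refine lt_of_le_of_ne (hIanti (by exact_mod_cast (hmono (Nat.lt_succ_self n)).le))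
      fun hEq => ?_
    have hx1 : x ∈ I ((s n : WithTop Γ)) := by rw [hImem, hxv]
    rw [← hEq, hImem, hxv] at hx1
    exact absurd (hmono (Nat.lt_succ_self n)) (not_lt.mpr (by exact_mod_cast hx1))
  have hcontain : ∀ n, m ^ N ≤ I ((s n : WithTop Γ)) :=
    fun n => le_trans hmN (hIanti (by exact_mod_cast hcon n))
  -- pass to the Artinian quotient R ⧸ m ^ N
  haveI hart : IsArtinian R (R ⧸ (m ^ N)) := by
    apply isArtinian_of_pow_smul_top_eq_bot m (IsLocalRing.maximalIdeal.isMaximal R) N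
    have h1 : Submodule.map (m ^ N).mkQ ((m ^ N) • (⊤ : Submodule R R)) =
        (m ^ N) • (⊤ : Submodule R (R ⧸ (m ^ N))) := by
      rw [Submodule.map_smul'', Submodule.map_top, Submodule.range_mkQ]
    rw [← h1, smul_eq_mul, Ideal.mul_top, eq_bot_iff]
    rintro x ⟨y, hy, rfl⟩
    simp only [Submodule.mkQ_apply, Submodule.mem_bot, Submodule.Quotient.mk_eq_zero]
    exact hy
  let f : ℕ → Submodule R (R ⧸ (m ^ N)) :=
    fun n => Submodule.map (m ^ N).mkQ (I ((s n : WithTop Γ)))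
  have hfanti : ∀ n, f (n + 1) < f n := by
    intro n
    have hle : f (n + 1) ≤ f n := Submodule.map_mono (hchain n).le
    refine lt_of_le_of_ne hle fun hEq => ?_
    have hcomap : ∀ k, Submodule.comap (m ^ N).mkQ (f k) = I ((s k : WithTop Γ)) := by
      intro k
      show Submodule.comap (m ^ N).mkQ (Submodule.map (m ^ N).mkQ _) = _
      rw [Submodule.comap_map_mkQ, sup_eq_right.mpr (hcontain k)]
    have := congrArg (Submodule.comap (m ^ N).mkQ) hEq
    rw [hcomap, hcomap] at this
    exact (hchain n).ne this
  -- contradiction with well-foundedness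
  obtain ⟨n, hn⟩ := IsArtinian.monotone_stabilizes (R := R) (M := R ⧸ (m ^ N))
    ⟨fun n => OrderDual.toDual (f n),
      fun a b hab => (antitone_nat_of_succ_le fun k => (hfanti k).le) hab⟩
  exact (hfanti n).ne (hn (n + 1) (Nat.le_succ n)).symm
end
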